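/- Let d be a positive nonsquare integer and z a positive integer with z² < d (or more generally d - z² ≠ 0 and the continued fraction converges). The convergents of the continued fraction [z; 2z/(d-z²), 2z, 2z/(d-z²), 2z, ...] (periodic with period the pair 2z/(d-z²), 2z) are exactly the Rédei rational functions Q_n(d,z) for n ≥ 1, and the continued fraction converges to √d. -/

import Mathlib

/-!
Put `α = z + √d` and `β = z - √d`. Splitting the binomial expansion by parity gives
`αⁿ = Nₙ + Dₙ √d` and `βⁿ = Nₙ - Dₙ √d`; computing instead in `ℚ[ω]` with `ω² = d` shows that
`Nₙ` and `Dₙ` both satisfy `uₙ₊₂ = 2z uₙ₊₁ + (d - z²) uₙ`, whose characteristic roots are `α, β`.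
The convergent recurrence with alternating quotients `2z/(d - z²)` and `2z` is this recurrence
rescaled: `pₙ = Nₙ₊₁ / (d - z²)^⌈n/2⌉`, and likewise `qₙ`. Finally
`Nₙ / Dₙ = √d (αⁿ + βⁿ) / (αⁿ - βⁿ) → √d` because `|β| < α`.
-/

/-- Rédei polynomial `N_n(d,x)` as a rational number. -/
def redeiN (d x : ℚ) (n : ℕ) : ℚ :=
  ∑ i ∈ Finset.range (n / 2 + 1), (n.choose (2 * i) : ℚ) * d ^ i * x ^ (n - 2 * i)

/-- Rédei polynomial `D_n(d,x)` as a rational number. -/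
def redeiD (d x : ℚ) (n : ℕ) : ℚ :=
  ∑ i ∈ Finset.range (n / 2 + 1), (n.choose (2 * i + 1) : ℚ) * d ^ i * x ^ (n - 2 * i - 1)

open Filter Topology

theorem Finset.sum_range_two_mul {M : Type*} [AddCommMonoid M] (f : ℕ → M) (m : ℕ) :
    ∑ k ∈ range (2 * m), f k = ∑ i ∈ range m, (f (2 * i) + f (2 * i + 1)) := by
  induction m with
  | zero => simp
  | succ m ih => rw [mul_add_one, sum_range_succ, sum_range_succ, sum_range_succ, ih, add_assoc]

open Finset in
theorem add_pow_eq_redeiN_add_redeiD_mul {R : Type*} [CommRing R] [Algebra ℚ R] (d x : ℚ)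
    (s : R) (hs : s ^ 2 = algebraMap ℚ R d) (n : ℕ) :
    (algebraMap ℚ R x + s) ^ n =
      algebraMap ℚ R (redeiN d x n) + algebraMap ℚ R (redeiD d x n) * s := by
  set X := algebraMap ℚ R x
  have hrange : ∑ k ∈ range (n + 1), s ^ k * X ^ (n - k) * (n.choose k : R) =
      ∑ k ∈ range (2 * (n / 2 + 1)), s ^ k * X ^ (n - k) * (n.choose k : R) := by
    refine sum_subset (range_subset_range.mpr (by omega)) fun k _ hk => ?_
    rw [Nat.choose_eq_zero_of_lt (by simpa using hk), Nat.cast_zero, mul_zero]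
  rw [add_comm, add_pow, hrange, sum_range_two_mul, redeiN, redeiD, map_sum, map_sum, sum_mul,
    ← sum_add_distrib]
  refine sum_congr rfl fun i _ => ?_
  simp only [map_mul, map_pow, map_natCast, pow_succ, pow_mul, hs, Nat.sub_sub]
  ring

namespace QuadraticAlgebra

theorem omega_sq_eq_algebraMap (d : ℚ) :
    (ω : QuadraticAlgebra ℚ d 0) ^ 2 = algebraMap ℚ _ d := by
  simp [sq, omega_mul_omega_eq_algebraMap]

theorem algebraMap_add_omega_pow (d x : ℚ) (n : ℕ) :
    (algebraMap ℚ (QuadraticAlgebra ℚ d 0) x + ω) ^ n = ⟨redeiN d x n, redeiD d x n⟩ := by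
  rw [add_pow_eq_redeiN_add_redeiD_mul d x _ (omega_sq_eq_algebraMap d)]
  ext <;> simp

theorem algebraMap_add_omega_pow_add_two (d x : ℚ) (n : ℕ) :
    (algebraMap ℚ (QuadraticAlgebra ℚ d 0) x + ω) ^ (n + 2) =
      (2 * x) • (algebraMap ℚ _ x + ω) ^ (n + 1) + (d - x ^ 2) • (algebraMap ℚ _ x + ω) ^ n := by
  simp only [Algebra.smul_def, map_mul, map_sub, map_pow, map_ofNat]
  linear_combination (algebraMap ℚ (QuadraticAlgebra ℚ d 0) x + ω) ^ n * omega_sq_eq_algebraMap d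

end QuadraticAlgebra

open QuadraticAlgebra in
theorem redeiN_add_two (d x : ℚ) (n : ℕ) :
    redeiN d x (n + 2) = 2 * x * redeiN d x (n + 1) + (d - x ^ 2) * redeiN d x n := by
  simpa [algebraMap_add_omega_pow] using congrArg re (algebraMap_add_omega_pow_add_two d x n)

open QuadraticAlgebra in
theorem redeiD_add_two (d x : ℚ) (n : ℕ) :
    redeiD d x (n + 2) = 2 * x * redeiD d x (n + 1) + (d - x ^ 2) * redeiD d x n := by
  simpa [algebraMap_add_omega_pow] using congrArg im (algebraMap_add_omega_pow_add_two d x n)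

@[simp] theorem redeiN_one (d x : ℚ) : redeiN d x 1 = x := by simp [redeiN]

@[simp] theorem redeiD_one (d x : ℚ) : redeiD d x 1 = 1 := by simp [redeiD]

@[simp] theorem redeiN_two (d x : ℚ) : redeiN d x 2 = x ^ 2 + d := by
  simp [redeiN, Finset.sum_range_succ]

@[simp] theorem redeiD_two (d x : ℚ) : redeiD d x 2 = 2 * x := by
  simp [redeiD, Finset.sum_range_succ]

theorem cast_redeiN_div_redeiD (d x : ℚ) (s : ℝ) (hs : s ^ 2 = d) (hs0 : s ≠ 0) (n : ℕ) :
    ((redeiN d x n / redeiD d x n : ℚ) : ℝ) =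
      s * (((x + s) ^ n + (x - s) ^ n) / ((x + s) ^ n - (x - s) ^ n)) := by
  have hplus := add_pow_eq_redeiN_add_redeiD_mul (R := ℝ) d x s (by simpa using hs) n
  have hminus := add_pow_eq_redeiN_add_redeiD_mul (R := ℝ) d x (-s) (by simpa using hs) n
  simp only [eq_ratCast] at hplus hminus
  rw [sub_eq_add_neg _ s, hplus, hminus, Rat.cast_div,
    ← mul_div_mul_left _ _ (mul_ne_zero two_ne_zero hs0)]
  ring

/-- The exponent `(n + 1) / 2 = ⌈n / 2⌉` counts the quotients `a / e` among `c 1, …, c n`. -/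
theorem eq_div_pow_of_periodic_recurrence {K : Type*} [Field K] (a e : K) (he : e ≠ 0)
    (c : ℕ → K) (hcodd : ∀ k : ℕ, c (2 * k + 1) = a / e) (hceven : ∀ k : ℕ, c (2 * k + 2) = a)
    (w u : ℕ → K) (hw : ∀ n : ℕ, w (n + 2) = c (n + 2) * w (n + 1) + w n)
    (hu : ∀ n : ℕ, u (n + 2) = a * u (n + 1) + e * u n)
    (hw0 : w 0 = u 0) (hw1 : w 1 = u 1 / e) (n : ℕ) :
    w n = u n / e ^ ((n + 1) / 2) := by
  suffices h : ∀ n, w n = u n / e ^ ((n + 1) / 2) ∧ w (n + 1) = u (n + 1) / e ^ ((n + 2) / 2) from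
    (h n).1
  intro n
  induction n with
  | zero => simpa [hw0] using hw1
  | succ n ih =>
    refine ⟨ih.2, ?_⟩
    rw [hw, ih.1, ih.2, hu]
    obtain ⟨k, rfl | rfl⟩ := Nat.even_or_odd' n
    · rw [hceven, show (2 * k + 1) / 2 = k by omega, show (2 * k + 2) / 2 = k + 1 by omega,
        show (2 * k + 1 + 2) / 2 = k + 1 by omega]
      field_simp
      ring
    · rw [show (2 * k + 1 + 1) / 2 = k + 1 by omega, show (2 * k + 1 + 2) / 2 = k + 1 by omega,
        show (2 * k + 1 + 1 + 2) / 2 = k + 2 by omega,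
        show 2 * k + 1 + 2 = 2 * (k + 1) + 1 by ring, hcodd]
      field_simp
      ring

theorem tendsto_add_pow_div_sub_pow {α β : ℝ} (h : |β| < α) :
    Tendsto (fun n : ℕ => (α ^ n + β ^ n) / (α ^ n - β ^ n)) atTop (𝓝 1) := by
  have hα : 0 < α := (abs_nonneg β).trans_lt h
  have hr : |β / α| < 1 := by rwa [abs_div, abs_of_pos hα, div_lt_one hα]
  have hlim := tendsto_pow_atTop_nhds_zero_of_abs_lt_one hr
  have := ((tendsto_const_nhds (x := (1 : ℝ))).add hlim).div
    (tendsto_const_nhds.sub hlim) (by norm_num : (1 : ℝ) - 0 ≠ 0)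
  rw [add_zero, sub_zero, div_one] at this
  refine this.congr fun n => ?_
  rw [Pi.div_apply, div_pow, one_add_div (pow_ne_zero n hα.ne'),
    one_sub_div (pow_ne_zero n hα.ne'), div_div_div_cancel_right₀ (pow_ne_zero n hα.ne')]

open Filter in
theorem redei_continued_fraction_general (d z : ℤ) (hd : 0 < d) (hz : 0 < z)
    (hne : d - z ^ 2 ≠ 0)
    (c : ℕ → ℚ) (hc0 : c 0 = z)
    (hcodd : ∀ k : ℕ, c (2 * k + 1) = (2 * z : ℚ) / ((d : ℚ) - (z : ℚ) ^ 2))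
    (hceven : ∀ k : ℕ, c (2 * k + 2) = (2 * z : ℚ))
    (p q : ℕ → ℚ)
    (hp0 : p 0 = c 0) (hq0 : q 0 = 1)
    (hp1 : p 1 = c 1 * p 0 + 1) (hq1 : q 1 = c 1 * q 0 + 0)
    (hprec : ∀ n : ℕ, p (n + 2) = c (n + 2) * p (n + 1) + p n)
    (hqrec : ∀ n : ℕ, q (n + 2) = c (n + 2) * q (n + 1) + q n) :
    (∀ n : ℕ, p n / q n = redeiN (d : ℚ) (z : ℚ) (n + 1) / redeiD (d : ℚ) (z : ℚ) (n + 1)) ∧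
    Tendsto (fun n : ℕ => ((p n / q n : ℚ) : ℝ)) atTop (nhds (Real.sqrt d)) := by
  have he : (d : ℚ) - (z : ℚ) ^ 2 ≠ 0 := by exact_mod_cast hne
  have hc1 : c 1 = 2 * z / ((d : ℚ) - (z : ℚ) ^ 2) := hcodd 0
  have hp := eq_div_pow_of_periodic_recurrence _ _ he c hcodd hceven p
    (fun n => redeiN d z (n + 1)) hprec (fun n => redeiN_add_two _ _ (n + 1))
    (by simp [hp0, hc0]) (by rw [hp1, hc1, hp0, hc0, redeiN_two]; field_simp; ring)
  have hq := eq_div_pow_of_periodic_recurrence _ _ he c hcodd hceven q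
    (fun n => redeiD d z (n + 1)) hqrec (fun n => redeiD_add_two _ _ (n + 1))
    (by simp [hq0]) (by rw [hq1, hc1, hq0, redeiD_two]; ring)
  have hratio (n : ℕ) : p n / q n = redeiN d z (n + 1) / redeiD d z (n + 1) := by
    rw [hp, hq, div_div_div_cancel_right₀ (pow_ne_zero _ he)]
  refine ⟨hratio, ?_⟩
  have hd' : (0 : ℝ) < d := by exact_mod_cast hd
  have hz' : (0 : ℝ) < z := by exact_mod_cast hz
  have hs : 0 < √(d : ℝ) := Real.sqrt_pos.mpr hd'
  have hzs : |(z : ℝ) - √d| < z + √d := abs_sub_lt_iff.mpr ⟨by linarith, by linarith⟩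
  have hlim := ((tendsto_add_pow_div_sub_pow hzs).comp (tendsto_add_atTop_nat 1)).const_mul √d
  rw [mul_one] at hlim
  refine hlim.congr fun n => ?_
  rw [hratio, cast_redeiN_div_redeiD _ _ √d (by simp [Real.sq_sqrt hd'.le]) hs.ne']
  simp

open Filter in
theorem redei_continued_fraction (d z : ℤ) (hd : 0 < d) (hsq : ¬ IsSquare d) (hz : 0 < z)
    (hne : d - z ^ 2 ≠ 0)
    (c : ℕ → ℚ) (hc0 : c 0 = z)
    (hcodd : ∀ k : ℕ, c (2 * k + 1) = (2 * z : ℚ) / ((d : ℚ) - (z : ℚ) ^ 2))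
    (hceven : ∀ k : ℕ, c (2 * k + 2) = (2 * z : ℚ))
    (p q : ℕ → ℚ)
    (hp0 : p 0 = c 0) (hq0 : q 0 = 1)
    (hp1 : p 1 = c 1 * p 0 + 1) (hq1 : q 1 = c 1 * q 0 + 0)
    (hprec : ∀ n : ℕ, p (n + 2) = c (n + 2) * p (n + 1) + p n)
    (hqrec : ∀ n : ℕ, q (n + 2) = c (n + 2) * q (n + 1) + q n) :
    (∀ n : ℕ, p n / q n = redeiN (d : ℚ) (z : ℚ) (n + 1) / redeiD (d : ℚ) (z : ℚ) (n + 1)) ∧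
    Tendsto (fun n : ℕ => ((p n / q n : ℚ) : ℝ)) atTop (nhds (Real.sqrt d)) :=
  redei_continued_fraction_general d z hd hz hne c hc0 hcodd hceven p q hp0 hq0 hp1 hq1 hprec hqrec
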